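/- arXiv:1901.03797 — 2 statements merged into one kernel-verified Lean document; each statement's English description precedes it below -/
import Mathlib

section
/- Suppose y = X_a β_a + X_m β_m + ε with ε mean-zero and independent of covariates. Then for any l in the index set of missing covariates, E[E(X_l | X_J) (y - X_a β_a - E(X_m | X_J) β_m)] = 0. -/
/-!
Write the estimating residual as `∑ i, βm i * (Xm i - E[Xm i | X_J]) + ε`. The imputed covariate
`E[X_l | X_J]` is `X_J`-measurable and square-integrable, so it is orthogonal to each residual
`Xm i - E[Xm i | X_J]`; and it is a function of the covariates, so it is independent of the
mean-zero noise `ε`.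
-/

open MeasureTheory ProbabilityTheory

section

variable {Ω : Type*} {m mΩ : MeasurableSpace Ω} {μ : Measure Ω}

theorem integral_mul_sub_condExp_eq_zero [IsFiniteMeasure μ] (hm : m ≤ mΩ) {f X : Ω → ℝ}
    (hf : StronglyMeasurable[m] f) (hfL2 : MemLp f 2 μ) (hX : MemLp X 2 μ) :
    ∫ ω, f ω * (X ω - μ[X|m] ω) ∂μ = 0 := by
  have hfX : Integrable (fun ω => f ω * X ω) μ := hfL2.integrable_mul hX
  have hfcX : Integrable (fun ω => f ω * μ[X|m] ω) μ :=
    hfL2.integrable_mul (hX.condExp one_le_two)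
  have pull_out : ∫ ω, f ω * μ[X|m] ω ∂μ = ∫ ω, f ω * X ω ∂μ := calc
    _ = ∫ ω, μ[f * X|m] ω ∂μ := integral_congr_ae
          (condExp_mul_of_stronglyMeasurable_left hf hfX (hX.integrable one_le_two)).symm
    _ = _ := integral_condExp hm
  simp_rw [mul_sub]
  rw [integral_sub hfX hfcX, pull_out, sub_self]

theorem integral_mul_eq_zero_of_indepFun {β : Type*} [MeasurableSpace β] {Z : Ω → β}
    {f ε : Ω → ℝ} (hm : m ≤ mΩ) (hmZ : m ≤ MeasurableSpace.comap Z inferInstance)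
    (hf : StronglyMeasurable[m] f) (hε : AEStronglyMeasurable ε μ) (hεZ : IndepFun ε Z μ)
    (hε0 : ∫ ω, ε ω ∂μ = 0) :
    ∫ ω, f ω * ε ω ∂μ = 0 := by
  have hεf : IndepFun ε f μ :=
    indep_of_indep_of_le_right hεZ (hf.measurable.comap_le.trans hmZ)
  rw [hεf.symm.integral_fun_mul_eq_mul_integral (hf.mono hm).aestronglyMeasurable hε, hε0,
    mul_zero]

end

theorem estimating_function_unbiased_imputed_general
    {Ω : Type*} {mΩ : MeasurableSpace Ω} (μ : Measure Ω) [IsProbabilityMeasure μ]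
    {pa pm : ℕ} (Xa : Ω → (Fin pa → ℝ)) (Xm : Ω → (Fin pm → ℝ)) (ε : Ω → ℝ)
    (hXmL2 : ∀ i, MemLp (fun ω => Xm ω i) 2 μ)
    (hεL2 : MemLp ε 2 μ)
    (hεmean : ∫ ω, ε ω ∂μ = 0)
    (hindep : IndepFun ε (fun ω => (Xa ω, Xm ω)) μ)
    (βa : Fin pa → ℝ) (βm : Fin pm → ℝ)
    (y : Ω → ℝ)
    (hy : ∀ ω, y ω = (∑ i, Xa ω i * βa i) + (∑ i, Xm ω i * βm i) + ε ω)
    (J : Finset (Fin pa)) (l : Fin pm)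
    (m : MeasurableSpace Ω)
    (hm_def : m = MeasurableSpace.comap (fun ω => (fun i : J => Xa ω (i : Fin pa))) inferInstance)
    (hm : m ≤ mΩ) :
    ∫ ω, (μ[(fun ω' => Xm ω' l) | m]) ω *
      (y ω - (∑ i, Xa ω i * βa i)
        - (∑ i, (μ[(fun ω' => Xm ω' i) | m]) ω * βm i)) ∂μ = 0 := by
  set f := μ[(fun ω' => Xm ω' l) | m]
  set residual : Fin pm → Ω → ℝ := fun i ω => Xm ω i - μ[(fun ω' => Xm ω' i) | m] ω
  have hf : StronglyMeasurable[m] f := stronglyMeasurable_condExp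
  have hfL2 : MemLp f 2 μ := (hXmL2 l).condExp one_le_two
  have hmZ : m ≤ MeasurableSpace.comap (fun ω => (Xa ω, Xm ω)) inferInstance := by
    have restrict : Measurable fun p : (Fin pa → ℝ) × (Fin pm → ℝ) => fun i : J => p.1 i := by
      fun_prop
    exact hm_def ▸ (restrict.comp (comap_measurable (fun ω => (Xa ω, Xm ω)))).comap_le
  have hy_residual : ∀ ω, y ω - ∑ i, Xa ω i * βa i - ∑ i, μ[(fun ω' => Xm ω' i) | m] ω * βm i
      = ∑ i, βm i * residual i ω + ε ω := by
    intro ω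
    simp only [hy, residual, mul_sub, Finset.sum_sub_distrib]
    simp only [mul_comm (βm _)]
    ring
  have integrable_residual : ∀ i, Integrable (fun ω => f ω * residual i ω) μ := fun i =>
    hfL2.integrable_mul ((hXmL2 i).sub ((hXmL2 i).condExp one_le_two))
  simp_rw [hy_residual, mul_add, Finset.mul_sum, mul_left_comm (f _) (βm _)]
  have integrable_sum : Integrable (fun ω => ∑ i, βm i * (f ω * residual i ω)) μ :=
    integrable_finsetSum _ fun i _ => (integrable_residual i).const_mul _
  have integrable_fε : Integrable (fun ω => f ω * ε ω) μ := hfL2.integrable_mul hεL2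
  rw [integral_add integrable_sum integrable_fε,
    integral_finsetSum _ fun i _ => (integrable_residual i).const_mul _,
    integral_mul_eq_zero_of_indepFun hm hmZ hf hεL2.aestronglyMeasurable hindep hεmean]
  simp [integral_const_mul, residual, integral_mul_sub_condExp_eq_zero hm hf hfL2 (hXmL2 _)]

/-- If `y = X_a β_a + X_m β_m + ε` with `ε` mean-zero and independent of the
covariates, then for any index `l` of a missing covariate,
`E[E(X_l | X_J) (y - X_a β_a - E(X_m | X_J) β_m)] = 0`. -/
theorem estimating_function_unbiased_imputed
    {Ω : Type*} {mΩ : MeasurableSpace Ω} (μ : Measure Ω) [IsProbabilityMeasure μ]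
    {pa pm : ℕ} (Xa : Ω → (Fin pa → ℝ)) (Xm : Ω → (Fin pm → ℝ)) (ε : Ω → ℝ)
    (hXa : Measurable Xa) (hXm : Measurable Xm) (hε : Measurable ε)
    (hXaL2 : ∀ i, MemLp (fun ω => Xa ω i) 2 μ)
    (hXmL2 : ∀ i, MemLp (fun ω => Xm ω i) 2 μ)
    (hεL2 : MemLp ε 2 μ)
    (hεmean : ∫ ω, ε ω ∂μ = 0)
    (hindep : IndepFun ε (fun ω => (Xa ω, Xm ω)) μ)
    (βa : Fin pa → ℝ) (βm : Fin pm → ℝ)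
    (y : Ω → ℝ)
    (hy : ∀ ω, y ω = (∑ i, Xa ω i * βa i) + (∑ i, Xm ω i * βm i) + ε ω)
    (J : Finset (Fin pa)) (l : Fin pm)
    (m : MeasurableSpace Ω)
    (hm_def : m = MeasurableSpace.comap (fun ω => (fun i : J => Xa ω (i : Fin pa))) inferInstance)
    (hm : m ≤ mΩ) :
    ∫ ω, (μ[(fun ω' => Xm ω' l) | m]) ω *
      (y ω - (∑ i, Xa ω i * βa i)
        - (∑ i, (μ[(fun ω' => Xm ω' i) | m]) ω * βm i)) ∂μ = 0 :=
  estimating_function_unbiased_imputed_general μ Xa Xm ε hXmL2 hεL2 hεmean hindep βa βm y hy J l m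
    hm_def hm
end

section
/- Let V1 be a symmetric positive definite k×k matrix and V2 a q×k matrix of rank q (q ≤ k). Let U be an s×k matrix (s ≤ k) such that U V1 Uᵀ is invertible and V2 Uᵀ has rank q. Then (V2 Uᵀ (U V1 Uᵀ)^{-1} U V2ᵀ)^{-1} − (V2 V1^{-1} V2ᵀ)^{-1} is positive semi-definite; that is, using a subset (linear transformation) of estimating functions yields an asymptotic variance at least as large as using all of them. -/
/-!
Write `S = U V₁ Uᵀ`. The block matrix `[[S, U], [Uᵀ, V₁⁻¹]]` has vanishing Schur complement
`S - U V₁ Uᵀ` at its lower corner, so it is positive semidefinite, and hence so is its other Schur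
complement `V₁⁻¹ - Uᵀ S⁻¹ U`. Conjugating by `V₂` gives `V₂ Uᵀ S⁻¹ U V₂ᵀ ≤ V₂ V₁⁻¹ V₂ᵀ` in the
Loewner order, and inversion is antitone on positive definite matrices (again by comparing the two
Schur complements, now of `[[A, 1], [1, B⁻¹]]`).
-/

open Matrix

namespace Matrix

variable {m n K : Type*} [Fintype m] [Fintype n] [Field K]

theorem vecMul_injective_of_rank_eq_card {M : Matrix m n K} (h : M.rank = Fintype.card m) :
    Function.Injective M.vecMul := by
  rw [vecMul_injective_iff, linearIndependent_iff_card_eq_finrank_span, ← h,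
    rank_eq_finrank_span_row, Set.finrank]

variable [PartialOrder K] [StarRing K] [StarOrderedRing K] [DecidableEq m] [DecidableEq n]

theorem PosDef.posSemidef_inv_sub_conjTranspose_mul_inv_mul {V : Matrix n n K} (hV : V.PosDef)
    (U : Matrix m n K) (hS : (U * V * Uᴴ).PosDef) :
    (V⁻¹ - Uᴴ * (U * V * Uᴴ)⁻¹ * U).PosSemidef := by
  have := hV.isUnit.invertible
  have := hV.inv.isUnit.invertible
  have := hS.isUnit.invertible
  have hblock : (fromBlocks (U * V * Uᴴ) U Uᴴ V⁻¹).PosSemidef := by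
    rw [PosDef.fromBlocks₂₂ _ _ hV.inv, inv_inv_of_invertible, sub_self]
    exact .zero
  rwa [PosDef.fromBlocks₁₁ _ _ hS] at hblock

theorem PosDef.posSemidef_inv_sub_inv {A B : Matrix n n K} (hB : B.PosDef)
    (hAB : (A - B).PosSemidef) : (B⁻¹ - A⁻¹).PosSemidef := by
  have hA : A.PosDef := by simpa using hB.add_posSemidef hAB
  have := hA.isUnit.invertible
  have := hB.isUnit.invertible
  have := hB.inv.isUnit.invertible
  have hblock : (fromBlocks A 1 (1 : Matrix n n K)ᴴ B⁻¹).PosSemidef := by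
    rwa [PosDef.fromBlocks₂₂ _ _ hB.inv, inv_inv_of_invertible, conjTranspose_one, one_mul,
      mul_one]
  rwa [PosDef.fromBlocks₁₁ _ _ hA, conjTranspose_one, one_mul, mul_one] at hblock

end Matrix

theorem subset_estimating_functions_variance_ge_general
    {k q s : ℕ}
    (V1 : Matrix (Fin k) (Fin k) ℝ) (hV1 : V1.PosDef)
    (V2 : Matrix (Fin q) (Fin k) ℝ)
    (U : Matrix (Fin s) (Fin k) ℝ)
    (hU : IsUnit (U * V1 * Uᵀ).det)
    (hV2U : (V2 * Uᵀ).rank = q) :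
    ((V2 * Uᵀ * (U * V1 * Uᵀ)⁻¹ * U * V2ᵀ)⁻¹ - (V2 * V1⁻¹ * V2ᵀ)⁻¹).PosSemidef := by
  have hS : (U * V1 * Uᵀ).PosDef := by
    have hSU : IsUnit (U * V1 * Uᴴ) := (isUnit_iff_isUnit_det _).mpr (by simpa using hU)
    simpa using (hV1.posSemidef.mul_mul_conjTranspose_same U).posDef_iff_isUnit.mpr hSU
  have hB : (V2 * Uᵀ * (U * V1 * Uᵀ)⁻¹ * U * V2ᵀ).PosDef := by
    have hrows : Function.Injective (V2 * Uᵀ).vecMul :=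
      vecMul_injective_of_rank_eq_card (by rwa [Fintype.card_fin])
    simpa [Matrix.mul_assoc] using hS.inv.mul_mul_conjTranspose_same hrows
  have hC := hV1.posSemidef_inv_sub_conjTranspose_mul_inv_mul U (by simpa using hS)
  refine hB.posSemidef_inv_sub_inv ?_
  convert hC.mul_mul_conjTranspose_same V2 using 1
  simp [Matrix.mul_sub, Matrix.sub_mul, Matrix.mul_assoc]

/-- Proposition 1, matrix form: for `V1` symmetric positive definite,
`V2` of full row rank `q`, and `U` a transformation such that `U V1 Uᵀ` is invertible and
`V2 Uᵀ` has rank `q`, the difference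
`(V2 Uᵀ (U V1 Uᵀ)⁻¹ U V2ᵀ)⁻¹ − (V2 V1⁻¹ V2ᵀ)⁻¹` is positive semi-definite. -/
theorem subset_estimating_functions_variance_ge
    {k q s : ℕ} (hqk : q ≤ k) (hsk : s ≤ k)
    (V1 : Matrix (Fin k) (Fin k) ℝ) (hV1 : V1.PosDef)
    (V2 : Matrix (Fin q) (Fin k) ℝ) (hV2rank : V2.rank = q)
    (U : Matrix (Fin s) (Fin k) ℝ)
    (hU : IsUnit (U * V1 * Uᵀ).det)
    (hV2U : (V2 * Uᵀ).rank = q) :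
    ((V2 * Uᵀ * (U * V1 * Uᵀ)⁻¹ * U * V2ᵀ)⁻¹ - (V2 * V1⁻¹ * V2ᵀ)⁻¹).PosSemidef :=
  subset_estimating_functions_variance_ge_general V1 hV1 V2 U hU hV2U
end
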